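/- Let T be a tree and let u be a vertex of T contained in some (γ_t-τ)-set. If T_2 is obtained from T by adding a new pendant vertex v adjacent to u, then γ_t(T_2) = γ_t(T) and τ(T_2) = τ(T). -/

import Mathlib

open SimpleGraph

/-- `D` is a total dominating set of `G`: every vertex has a neighbor in `D`. -/
def IsTotalDomSet {V : Type*} (G : SimpleGraph V) (D : Finset V) : Prop :=
  ∀ v : V, ∃ u ∈ D, G.Adj v u

/-- `X` is a vertex cover of `G`: every edge has an endpoint in `X`. -/
def IsVertexCover {V : Type*} (G : SimpleGraph V) (X : Finset V) : Prop :=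
  ∀ ⦃a b : V⦄, G.Adj a b → a ∈ X ∨ b ∈ X

/-- The total domination number `γ_t(G)`. -/
noncomputable def gammaT {V : Type*} (G : SimpleGraph V) : ℕ :=
  sInf {n | ∃ D : Finset V, IsTotalDomSet G D ∧ D.card = n}

/-- The vertex cover number `τ(G)`. -/
noncomputable def tau {V : Type*} (G : SimpleGraph V) : ℕ :=
  sInf {n | ∃ X : Finset V, _root_.IsVertexCover G X ∧ X.card = n}

/-- A `(γ_t-τ)`-set: simultaneously a minimum total dominating set and a
minimum vertex cover. -/
def IsGttSet {V : Type*} (G : SimpleGraph V) (D : Finset V) : Prop :=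
  IsTotalDomSet G D ∧ _root_.IsVertexCover G D ∧ D.card = gammaT G ∧ D.card = tau G

/-- The sum `G +_{uv} H`: the disjoint union of `G` and `H` with the extra edge `uv`. -/
def graphSum {α β : Type*} (G : SimpleGraph α) (H : SimpleGraph β) (u : α) (v : β) :
    SimpleGraph (α ⊕ β) :=
  SimpleGraph.fromRel (fun x y =>
    (∃ a b, x = Sum.inl a ∧ y = Sum.inl b ∧ G.Adj a b) ∨
    (∃ a b, x = Sum.inr a ∧ y = Sum.inr b ∧ H.Adj a b) ∨
    (x = Sum.inl u ∧ y = Sum.inr v))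

/-- The private neighborhood `pn(u,S) = {w : N(w) ∩ S = {u}}`. -/
def pn {V : Type*} (G : SimpleGraph V) (S : Finset V) (u : V) : Set V :=
  {w | G.neighborSet w ∩ ↑S = {u}}

/-- `v` is quasi-isolated: for some minimum total dominating set `S` there is
`u ∈ S` with `pn(u,S) = {v}`. -/
def QuasiIsolated {V : Type*} (G : SimpleGraph V) (v : V) : Prop :=
  ∃ S : Finset V, IsTotalDomSet G S ∧ S.card = gammaT G ∧ ∃ u ∈ S, pn G S u = {v}

/-- An end vertex: a vertex of degree 1. -/
def IsEndVertex {V : Type*} (G : SimpleGraph V) (v : V) : Prop :=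
  (G.neighborSet v).ncard = 1

/- A total dominating set (resp. vertex cover) of `T` containing `u` remains one after a leaf
is attached at `u`, since `u` dominates the leaf and covers the new edge; so neither parameter
grows. Conversely, a total dominating set of the larger graph is mapped onto one of `T` by sending
the leaf to a fixed neighbour of `u`, and a vertex cover restricts to one of `T`; so neither
parameter drops. -/

open Finset

section GraphSum

variable {α β : Type*} {G : SimpleGraph α} {H : SimpleGraph β} {u : α} {v : β}

lemma graphSum_adj_inl_inl {a b : α} :
    (graphSum G H u v).Adj (Sum.inl a) (Sum.inl b) ↔ G.Adj a b := by
  simpa [graphSum, G.adj_comm b] using G.ne_of_adj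

lemma graphSum_adj_inr_inr {a b : β} :
    (graphSum G H u v).Adj (Sum.inr a) (Sum.inr b) ↔ H.Adj a b := by
  simpa [graphSum, H.adj_comm b] using H.ne_of_adj

lemma graphSum_adj_inl_inr {a : α} {b : β} :
    (graphSum G H u v).Adj (Sum.inl a) (Sum.inr b) ↔ a = u ∧ b = v := by
  simp [graphSum]

end GraphSum

section Extremal

variable {V : Type*} {G : SimpleGraph V}

lemma gammaT_le_card {D : Finset V} (hD : IsTotalDomSet G D) : gammaT G ≤ #D :=
  Nat.sInf_le ⟨D, hD, rfl⟩

lemma exists_isTotalDomSet_card_eq_gammaT {D : Finset V} (hD : IsTotalDomSet G D) :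
    ∃ S, IsTotalDomSet G S ∧ #S = gammaT G :=
  Nat.sInf_mem (s := {n | ∃ S, IsTotalDomSet G S ∧ #S = n}) ⟨#D, D, hD, rfl⟩

lemma tau_le_card {X : Finset V} (hX : _root_.IsVertexCover G X) : tau G ≤ #X :=
  Nat.sInf_le ⟨X, hX, rfl⟩

lemma exists_isVertexCover_card_eq_tau {X : Finset V} (hX : _root_.IsVertexCover G X) :
    ∃ S, _root_.IsVertexCover G S ∧ #S = tau G :=
  Nat.sInf_mem (s := {n | ∃ S, _root_.IsVertexCover G S ∧ #S = n}) ⟨#X, X, hX, rfl⟩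

end Extremal

section Pendant

variable {V β : Type*} {G : SimpleGraph V} {H : SimpleGraph β} {u : V} {v : β}

lemma IsTotalDomSet.map_inl_graphSum_bot {D : Finset V} (hD : IsTotalDomSet G D) (hu : u ∈ D) :
    IsTotalDomSet (graphSum G (⊥ : SimpleGraph Unit) u ()) (D.map .inl) := by
  rintro (x | ⟨⟩)
  · obtain ⟨y, hy, hxy⟩ := hD x
    exact ⟨.inl y, mem_map_of_mem _ hy, graphSum_adj_inl_inl.2 hxy⟩
  · exact ⟨.inl u, mem_map_of_mem _ hu, (graphSum_adj_inl_inr.2 ⟨rfl, rfl⟩).symm⟩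

lemma IsVertexCover.map_inl_graphSum_bot {X : Finset V} (hX : _root_.IsVertexCover G X)
    (hu : u ∈ X) : _root_.IsVertexCover (graphSum G (⊥ : SimpleGraph Unit) u ()) (X.map .inl) := by
  rintro (a | ⟨⟩) (b | ⟨⟩) hab
  · exact (hX (graphSum_adj_inl_inl.1 hab)).imp (mem_map_of_mem _) (mem_map_of_mem _)
  · exact .inl ((graphSum_adj_inl_inr.1 hab).1 ▸ mem_map_of_mem _ hu)
  · exact .inr ((graphSum_adj_inl_inr.1 hab.symm).1 ▸ mem_map_of_mem _ hu)
  · exact (graphSum_adj_inr_inr.1 hab).elim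

lemma IsTotalDomSet.image_graphSum [DecidableEq V] {w : V} (huw : G.Adj u w) {S : Finset (V ⊕ β)}
    (hS : IsTotalDomSet (graphSum G H u v) S) :
    IsTotalDomSet G (S.image (Sum.elim id fun _ => w)) := by
  intro x
  obtain ⟨y | b, hy, hxy⟩ := hS (.inl x)
  · exact ⟨y, mem_image_of_mem _ hy, graphSum_adj_inl_inl.1 hxy⟩
  · obtain ⟨rfl, -⟩ := graphSum_adj_inl_inr.1 hxy
    exact ⟨w, mem_image_of_mem _ hy, huw⟩

lemma IsVertexCover.toLeft_graphSum {S : Finset (V ⊕ β)}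
    (hS : _root_.IsVertexCover (graphSum G H u v) S) : _root_.IsVertexCover G S.toLeft :=
  fun _ _ hab => (hS (graphSum_adj_inl_inl.2 hab)).imp mem_toLeft.2 mem_toLeft.2

theorem gammaT_graphSum_bot {D : Finset V} (hD : IsTotalDomSet G D) (hcard : #D = gammaT G)
    (hu : u ∈ D) : gammaT (graphSum G (⊥ : SimpleGraph Unit) u ()) = gammaT G := by
  classical
  have hD' := hD.map_inl_graphSum_bot hu
  refine le_antisymm (by simpa [hcard] using gammaT_le_card hD') ?_
  obtain ⟨w, -, huw⟩ := hD u
  obtain ⟨S, hS, hScard⟩ := exists_isTotalDomSet_card_eq_gammaT hD'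
  calc gammaT G ≤ #(S.image (Sum.elim id fun _ => w)) :=
        gammaT_le_card (hS.image_graphSum huw)
    _ ≤ #S := card_image_le
    _ = _ := hScard

theorem tau_graphSum_bot {X : Finset V} (hX : _root_.IsVertexCover G X) (hcard : #X = tau G)
    (hu : u ∈ X) : tau (graphSum G (⊥ : SimpleGraph Unit) u ()) = tau G := by
  have hX' := hX.map_inl_graphSum_bot hu
  refine le_antisymm (by simpa [hcard] using tau_le_card hX') ?_
  obtain ⟨S, hS, hScard⟩ := exists_isVertexCover_card_eq_tau hX'
  calc tau G ≤ #S.toLeft := tau_le_card hS.toLeft_graphSum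
    _ ≤ #S := card_toLeft_le
    _ = _ := hScard

end Pendant

theorem stmt12_general {V : Type*} (T : SimpleGraph V) (u : V)
    (hu : ∃ D : Finset V, IsGttSet T D ∧ u ∈ D) :
    gammaT (graphSum T (⊥ : SimpleGraph Unit) u ()) = gammaT T ∧
    tau (graphSum T (⊥ : SimpleGraph Unit) u ()) = tau T := by
  obtain ⟨D, ⟨hDt, hDc, hDg, hDtau⟩, huD⟩ := hu
  exact ⟨gammaT_graphSum_bot hDt hDg huD, tau_graphSum_bot hDc hDtau huD⟩

/-- Operation `O_2`: adding a pendant vertex to a vertex `u` in some `(γ_t-τ)`-set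
leaves `γ_t` and `τ` unchanged. -/
theorem stmt12 {V : Type*} (T : SimpleGraph V) (hT : T.IsTree) (u : V)
    (hu : ∃ D : Finset V, IsGttSet T D ∧ u ∈ D) :
    gammaT (graphSum T (⊥ : SimpleGraph Unit) u ()) = gammaT T ∧
    tau (graphSum T (⊥ : SimpleGraph Unit) u ()) = tau T :=
  stmt12_general T u hu
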